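/- arXiv:2110.10295 — 3 statements merged into one kernel-verified Lean document; each statement's English description precedes it below -/
import Mathlib

section
/- Let f : [0,1] → [0,1] be continuous, strictly increasing on [0,1/2], strictly decreasing on [1/2,1], with f(0)=f(1)=0, f(1/2) > 1/2, and suppose f has no cycle of length 2. Let x_max = f(1/2). Then f maps (1/2, x_max] into (1/2, x_max]. -/
theorem stmt_7 (f : ℝ → ℝ)
    (hmap : Set.MapsTo f (Set.Icc (0:ℝ) 1) (Set.Icc (0:ℝ) 1))
    (hcont : ContinuousOn f (Set.Icc (0:ℝ) 1))
    (hinc : StrictMonoOn f (Set.Icc (0:ℝ) (1/2)))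
    (hdec : StrictAntiOn f (Set.Icc (1/2:ℝ) 1))
    (h0 : f 0 = 0) (h1 : f 1 = 0)
    (hpeak : 1/2 < f (1/2))
    (hno2 : ¬ ∃ x ∈ Set.Icc (0:ℝ) 1, ∃ y ∈ Set.Icc (0:ℝ) 1,
      x ≠ y ∧ f x = y ∧ f y = x) :
    Set.MapsTo f (Set.Ioc (1/2:ℝ) (f (1/2))) (Set.Ioc (1/2:ℝ) (f (1/2))) := by
  have hhalf : (1/2:ℝ) ∈ Set.Icc (0:ℝ) 1 := ⟨by norm_num, by norm_num⟩
  have hMmem : f (1/2) ∈ Set.Icc (0:ℝ) 1 := hmap hhalf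
  have hM1 : f (1/2) ≤ 1 := hMmem.2
  intro x hx
  obtain ⟨hx1, hx2⟩ := hx
  have hxmem : x ∈ Set.Icc (0:ℝ) 1 := ⟨by linarith, by linarith⟩
  have hxhalf : x ∈ Set.Icc (1/2:ℝ) 1 := ⟨hx1.le, hxmem.2⟩
  have hfx_lt : f x < f (1/2) := hdec ⟨le_refl _, by norm_num⟩ hxhalf hx1
  refine ⟨?_, hfx_lt.le⟩
  by_contra hle
  push_neg at hle
  -- hle : f x ≤ 1/2
  -- find c ∈ [1/2, x] with f c = 1/2
  obtain ⟨c, hcmem, hfc⟩ :=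
    intermediate_value_Icc' (by linarith : (1/2:ℝ) ≤ x)
      (hcont.mono (Set.Icc_subset_Icc (by norm_num) hxmem.2)) ⟨hle, hpeak.le⟩
  have hcmem01 : c ∈ Set.Icc (0:ℝ) 1 := ⟨by linarith [hcmem.1], le_trans hcmem.2 hxmem.2⟩
  have hchalf : c ∈ Set.Icc (1/2:ℝ) 1 := ⟨hcmem.1, hcmem01.2⟩
  have hc_gt : 1/2 < c := by
    rcases lt_or_eq_of_le hcmem.1 with h | h
    · exact h
    · exfalso; rw [← h] at hfc; linarith
  have hcM : c < f (1/2) := by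
    rcases lt_or_eq_of_le (le_trans hcmem.2 hx2) with h | h
    · exact h
    · exfalso
      exact hno2 ⟨1/2, hhalf, f (1/2), hMmem, ne_of_lt hpeak, rfl, by rw [← h]; exact hfc⟩
  have hMhalf : f (1/2) ∈ Set.Icc (1/2:ℝ) 1 := ⟨hpeak.le, hM1⟩
  -- f (f (1/2)) properties
  have hfM_lt : f (f (1/2)) < 1/2 := by
    have := hdec hchalf hMhalf hcM
    rwa [hfc] at this
  have hfMmem : f (f (1/2)) ∈ Set.Icc (0:ℝ) 1 := hmap hMmem
  have hffM_le : f (f (f (1/2))) ≤ f (1/2) :=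
    hinc.monotoneOn ⟨hfMmem.1, hfM_lt.le⟩ ⟨by norm_num, le_refl _⟩ hfM_lt.le
  have hffM_lt : f (f (f (1/2))) < f (1/2) := by
    rcases lt_or_eq_of_le hffM_le with h | h
    · exact h
    · exfalso
      refine hno2 ⟨f (1/2), hMmem, f (f (1/2)), hfMmem, ?_, rfl, h⟩
      intro heq; linarith [heq ▸ hfM_lt]
  -- IVT for g t = f (f t) - t on [c, f(1/2)]
  have hsub : Set.Icc c (f (1/2)) ⊆ Set.Icc (0:ℝ) 1 :=
    Set.Icc_subset_Icc hcmem01.1 hM1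
  have hffcont : ContinuousOn (fun t => f (f t)) (Set.Icc c (f (1/2))) := by
    apply ContinuousOn.comp hcont (hcont.mono hsub)
    intro t ht
    exact hmap (hsub ht)
  have hgcont : ContinuousOn (fun t => f (f t) - t) (Set.Icc c (f (1/2))) :=
    hffcont.sub continuousOn_id
  have hgc : 0 < f (f c) - c := by rw [hfc]; linarith
  have hgM : f (f (f (1/2))) - f (1/2) < 0 := by linarith
  obtain ⟨y, hymem, hgy⟩ :=
    intermediate_value_Icc' hcM.le hgcont (Set.mem_Icc.mpr ⟨hgM.le, hgc.le⟩)
  have hymem01 : y ∈ Set.Icc (0:ℝ) 1 := hsub hymem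
  have hyc : c < y := by
    rcases lt_or_eq_of_le hymem.1 with h | h
    · exact h
    · exfalso; rw [← h] at hgy; simp at hgy; linarith
  have hfy_lt : f y < 1/2 := by
    have := hdec hchalf ⟨by linarith [hymem.1, hchalf.1], hymem01.2⟩ hyc
    rwa [hfc] at this
  have hffy : f (f y) = y := by simpa using sub_eq_zero.mp hgy
  exact hno2 ⟨y, hymem01, f y, hmap hymem01, by intro h; linarith [h ▸ hfy_lt], rfl, hffy⟩
end

section
/- Let R' ⊆ (ℕ → Bool) and define R = { y : ℕ → Bool | ∃ j ≥ 0, (∀ i < j·n, y i = w (i mod n)) ∧ (fun i => y (j·n + i)) ∈ R' } for a fixed word w : Fin n → Bool (i.e., R = w* R'). If no d-element set can be weakly shattered by R' (where weak shattering allows discarding arbitrary finite prefixes of each sequence), then no (d + ⌈log₂ n⌉ + 2)-element set can be weakly shattered by R. -/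
/-!
A tail `yᵢ` of an element `w^j z` of `R` (with `z ∈ R'`) follows the periodic word `w` up to a
switch time `tᵢ`, and is a tail of an element of `R'` afterwards. Choose `d` of the sequences
whose switch times are all at most some `T` that bounds the remaining `k` switch times from below.
Shifted by `T`, those `d` sequences are tails of elements of `R'`, so they miss some pattern `τ`
at every position `≥ T`. Hence every pattern of the other `k` sequences that is combined with `τ`
occurs before `T`, where all of them are periodic with period `n` and are determined by the
position modulo `n`. This gives `2 ^ k ≤ n`, which fails for `k = ⌈log₂ n⌉ + 2`.
-/

/-- `S` weakly shatters `d` points: there are tails of elements of `S`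
realizing all `2^d` Boolean patterns at some coordinates. -/
def WeaklyShatters (S : Set (ℕ → Bool)) (d : ℕ) : Prop :=
  ∃ y : Fin d → (ℕ → Bool),
    (∀ i, ∃ z ∈ S, ∃ s : ℕ, ∀ n, y i n = z (s + n)) ∧
    ∀ σ : Fin d → Bool, ∃ j : ℕ, ∀ i, y i j = σ i

def IsTailOf (S : Set (ℕ → Bool)) (y : ℕ → Bool) : Prop :=
  ∃ z ∈ S, ∃ s : ℕ, ∀ n, y n = z (s + n)

lemma IsTailOf.shift {S : Set (ℕ → Bool)} {y : ℕ → Bool} (h : IsTailOf S y) (m : ℕ) :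
    IsTailOf S fun l => y (m + l) := by
  obtain ⟨z, hz, s, hs⟩ := h
  exact ⟨z, hz, s + m, fun l => (hs _).trans (by rw [add_assoc])⟩

lemma exists_perm_le_threshold_le {d k : ℕ} (t : Fin (d + k) → ℕ) :
    ∃ (π : Equiv.Perm (Fin (d + k))) (T : ℕ),
      (∀ i, t (π (Fin.castAdd k i)) ≤ T) ∧ ∀ i, T ≤ t (π (Fin.natAdd d i)) := by
  refine ⟨Tuple.sort t, Finset.univ.sup fun i => t (Tuple.sort t (Fin.castAdd k i)),
    fun i => Finset.le_sup (f := fun i => t (Tuple.sort t (Fin.castAdd k i)))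
      (Finset.mem_univ i), fun i => Finset.sup_le fun b _ => Tuple.monotone_sort t ?_⟩
  rw [Fin.le_def, Fin.val_castAdd, Fin.val_natAdd]
  omega

lemma exists_pattern_forall_ge_ne {R' : Set (ℕ → Bool)} {d : ℕ} (hR' : ¬ WeaklyShatters R' d)
    (u : Fin d → ℕ → Bool) (T : ℕ) (hu : ∀ i, IsTailOf R' fun l => u i (T + l)) :
    ∃ τ : Fin d → Bool, ∀ j ≥ T, ∃ i, u i j ≠ τ i := by
  by_contra! h
  refine hR' ⟨fun i l => u i (T + l), hu, fun τ => ?_⟩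
  obtain ⟨j, hjT, hj⟩ := h τ
  exact ⟨j - T, by simpa only [Nat.add_sub_cancel' hjT] using hj⟩

lemma two_pow_le_of_forall_patterns {R' : Set (ℕ → Bool)} {d k n : ℕ} (hn : 0 < n)
    (hR' : ¬ WeaklyShatters R' d) (y : Fin (d + k) → ℕ → Bool) (t : Fin (d + k) → ℕ)
    (g : Fin (d + k) → Fin n → Bool)
    (hprefix : ∀ i, ∀ l < t i, y i l = g i ⟨l % n, Nat.mod_lt l hn⟩)
    (htail : ∀ i, IsTailOf R' fun l => y i (t i + l))
    (hpat : ∀ σ : Fin (d + k) → Bool, ∃ j, ∀ i, y i j = σ i) :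
    2 ^ k ≤ n := by
  obtain ⟨π, T, hfirst, hlast⟩ := exists_perm_le_threshold_le t
  have hshift : ∀ i, IsTailOf R' fun l => y (π (Fin.castAdd k i)) (T + l) := by
    intro i
    simpa only [← add_assoc, Nat.add_sub_cancel' (hfirst i)] using
      (htail (π (Fin.castAdd k i))).shift (T - t (π (Fin.castAdd k i)))
  obtain ⟨τ, hτ⟩ := exists_pattern_forall_ge_ne hR' _ T hshift
  have hsurj : Function.Surjective fun (r : Fin n) (i : Fin k) => g (π (Fin.natAdd d i)) r := by
    intro ρ
    obtain ⟨j, hj⟩ := hpat (Fin.append τ ρ ∘ π.symm)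
    simp only [Function.comp_apply] at hj
    have hjT : j < T := by
      by_contra! hjT
      obtain ⟨i, hi⟩ := hτ j hjT
      simp [hj] at hi
    refine ⟨⟨j % n, Nat.mod_lt j hn⟩, funext fun i => ?_⟩
    have hji := hj (π (Fin.natAdd d i))
    rw [hprefix _ j (hjT.trans_le (hlast i))] at hji
    simpa using hji
  simpa using Fintype.card_le_of_surjective _ hsurj

lemma exists_prefix_of_isTailOf_wordPow {n : ℕ} (hn : 0 < n) (w : Fin n → Bool)
    {R' : Set (ℕ → Bool)} {y : ℕ → Bool}
    (hy : IsTailOf { x | ∃ j : ℕ,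
      (∀ i < j * n, x i = w ⟨i % n, Nat.mod_lt i hn⟩) ∧ (fun i => x (j * n + i)) ∈ R' } y) :
    ∃ (t : ℕ) (g : Fin n → Bool),
      (∀ l < t, y l = g ⟨l % n, Nat.mod_lt l hn⟩) ∧ IsTailOf R' fun l => y (t + l) := by
  obtain ⟨x, ⟨j, hprefix, hx⟩, s, hs⟩ := hy
  refine ⟨j * n - s, fun r => w ⟨(s + r) % n, Nat.mod_lt _ hn⟩, fun l hl => ?_,
    _, hx, s - j * n, fun l => ?_⟩
  · rw [hs, hprefix _ (by omega)]
    simp only [Nat.add_mod_mod]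
  · simp only [hs]
    congr 1
    omega

theorem stmt_14 (n : ℕ) (hn : 0 < n) (w : Fin n → Bool)
    (R' : Set (ℕ → Bool)) (d : ℕ)
    (R : Set (ℕ → Bool))
    (hR : R = { y | ∃ j : ℕ,
      (∀ i < j * n, y i = w ⟨i % n, Nat.mod_lt i hn⟩) ∧
      (fun i => y (j * n + i)) ∈ R' })
    (hR' : ¬ WeaklyShatters R' d) :
    ¬ WeaklyShatters R (d + Nat.clog 2 n + 2) := by
  rintro ⟨y, hy, hpat⟩
  subst hR
  choose t g hprefix htail using fun i => exists_prefix_of_isTailOf_wordPow hn w (hy i)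
  have hle : 2 ^ (Nat.clog 2 n + 2) ≤ n :=
    two_pow_le_of_forall_patterns hn hR' y t g hprefix htail hpat
  have hlt : 2 ^ Nat.clog 2 n < 2 ^ (Nat.clog 2 n + 2) :=
    Nat.pow_lt_pow_right one_lt_two (by omega)
  have hclog : n ≤ 2 ^ Nat.clog 2 n := Nat.le_pow_clog one_lt_two n
  omega
end

section
/- Let f : [0,1] → [0,1] be continuous, strictly increasing on [0,1/2], strictly decreasing on [1/2,1], f(0)=f(1)=0, and suppose the largest fixed point x_m of f satisfies x_m ≤ 1/2 and f has no fixed point in (1/2, 1]. Then f has no cycle of length 2. -/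
lemma aux_16 (f : ℝ → ℝ)
    (hcont : ContinuousOn f (Set.Icc (0:ℝ) 1))
    (hinc : StrictMonoOn f (Set.Icc (0:ℝ) (1/2)))
    (hdec : StrictAntiOn f (Set.Icc (1/2:ℝ) 1))
    (hnofix : ∀ x ∈ Set.Ioc (1/2:ℝ) 1, f x ≠ x)
    (x y : ℝ) (hx : x ∈ Set.Icc (0:ℝ) 1) (hy : y ∈ Set.Icc (0:ℝ) 1)
    (hlt : x < y) (hfx : f x = y) (hfy : f y = x) : False := by
  by_cases hy2 : y ≤ 1/2
  · have := hinc ⟨hx.1, (hlt.trans_le hy2).le⟩ ⟨hy.1, hy2⟩ hlt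
    rw [hfx, hfy] at this
    linarith
  · push_neg at hy2
    have hhalf : (1/2:ℝ) < f (1/2) := by
      rcases lt_trichotomy x (1/2) with h | h | h
      · have := hinc ⟨hx.1, h.le⟩ ⟨by norm_num, le_refl _⟩ h
        rw [hfx] at this; linarith
      · rw [← h, hfx]; linarith
      · have := hdec ⟨le_refl _, by norm_num⟩ ⟨h.le, hx.2⟩ h
        rw [hfx] at this; linarith
    have hsub : Set.Icc (1/2:ℝ) y ⊆ Set.Icc (0:ℝ) 1 :=
      Set.Icc_subset_Icc (by norm_num) hy.2
    have hgc : ContinuousOn (fun t => t - f t) (Set.Icc (1/2:ℝ) y) :=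
      continuousOn_id.sub (hcont.mono hsub)
    have key : (0:ℝ) ∈ (fun t => t - f t) '' Set.Ioo (1/2:ℝ) y := by
      apply intermediate_value_Ioo hy2.le hgc
      constructor
      · show (1:ℝ)/2 - f (1/2) < 0; linarith
      · show 0 < y - f y; rw [hfy]; linarith
    obtain ⟨c, hc, hc0⟩ := key
    exact hnofix c ⟨hc.1, hc.2.le.trans hy.2⟩ (by simp only at hc0; linarith)

theorem stmt_16 (f : ℝ → ℝ)
    (hmap : Set.MapsTo f (Set.Icc (0:ℝ) 1) (Set.Icc (0:ℝ) 1))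
    (hcont : ContinuousOn f (Set.Icc (0:ℝ) 1))
    (hinc : StrictMonoOn f (Set.Icc (0:ℝ) (1/2)))
    (hdec : StrictAntiOn f (Set.Icc (1/2:ℝ) 1))
    (h0 : f 0 = 0) (h1 : f 1 = 0)
    (hnofix : ∀ x ∈ Set.Ioc (1/2:ℝ) 1, f x ≠ x) :
    ¬ ∃ x ∈ Set.Icc (0:ℝ) 1, ∃ y ∈ Set.Icc (0:ℝ) 1,
      x ≠ y ∧ f x = y ∧ f y = x := by
  rintro ⟨x, hx, y, hy, hxy, hfx, hfy⟩
  rcases lt_or_gt_of_ne hxy with h | h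
  · exact aux_16 f hcont hinc hdec hnofix x y hx hy h hfx hfy
  · exact aux_16 f hcont hinc hdec hnofix y x hy hx h hfy hfx
end
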